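/- arXiv:1703.01062 — 2 statements merged into one kernel-verified Lean document; each statement's English description precedes it below -/
import Mathlib

section
/- Given K ≥ 1 and positive constants γ₁, ..., γ_K, the sum-throughput Σᵢ τᵢ log₂(1 + γᵢ/τᵢ) subject to Σᵢ τᵢ ≤ 1 and τᵢ > 0 is maximized by τᵢ* = γᵢ / (Σⱼ γⱼ), achieving the maximum value log₂(1 + Σⱼ γⱼ). -/
/-!
Each term is bounded through the tangent line of the concave function `log` at `1 + Σⱼ γⱼ`:
`τ log(1 + γ/τ) ≤ τ log(1 + G) + (γ - τ G)/(1 + G)` with `G = Σⱼ γⱼ`. Summing, the linear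
parts add up to `(1 - Σᵢ τᵢ) G/(1 + G)`, which `G/(1 + G) ≤ log(1 + G)` bounds by
`(1 - Σᵢ τᵢ) log(1 + G)`. The allocation `τᵢ = γᵢ/G` makes every ratio `γᵢ/τᵢ` equal to `G`,
so it attains the bound.
-/

open Finset

namespace Real

lemma log_le_log_add_sub_div {x a : ℝ} (hx : 0 < x) (ha : 0 < a) :
    log x ≤ log a + (x - a) / a := by
  have h := log_le_sub_one_of_pos (div_pos hx ha)
  rw [log_div hx.ne' ha.ne', div_sub_one ha.ne'] at h
  linarith

lemma mul_log_one_add_div_le {τ γ G : ℝ} (hτ : 0 < τ) (hγ : 0 ≤ γ) (hG : 0 ≤ G) :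
    τ * log (1 + γ / τ) ≤ τ * log (1 + G) + (γ - τ * G) / (1 + G) := by
  have h := mul_le_mul_of_nonneg_left
    (log_le_log_add_sub_div (x := 1 + γ / τ) (by positivity) (by positivity : 0 < 1 + G)) hτ.le
  have h' : τ * ((1 + γ / τ - (1 + G)) / (1 + G)) = (γ - τ * G) / (1 + G) := by
    field_simp
    ring
  linarith

lemma div_one_add_le_log_one_add {G : ℝ} (hG : 0 ≤ G) : G / (1 + G) ≤ log (1 + G) := by
  have h := one_sub_inv_le_log_of_pos (by positivity : 0 < 1 + G)
  have h' : 1 - (1 + G)⁻¹ = G / (1 + G) := by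
    field_simp
    ring
  linarith

variable {ι : Type*} [Fintype ι]

theorem sum_mul_log_one_add_div_le {γ τ : ι → ℝ} (hγ : ∀ i, 0 ≤ γ i) (hτ : ∀ i, 0 < τ i)
    (hτsum : ∑ i, τ i ≤ 1) :
    ∑ i, τ i * log (1 + γ i / τ i) ≤ log (1 + ∑ j, γ j) := by
  set G := ∑ j, γ j
  set S := ∑ i, τ i
  have hG : 0 ≤ G := sum_nonneg fun i _ => hγ i
  calc ∑ i, τ i * log (1 + γ i / τ i)
      ≤ ∑ i, (τ i * log (1 + G) + (γ i - τ i * G) / (1 + G)) :=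
        sum_le_sum fun i _ => mul_log_one_add_div_le (hτ i) (hγ i) hG
    _ = S * log (1 + G) + (1 - S) * (G / (1 + G)) := by
        rw [sum_add_distrib, ← sum_mul, ← sum_div, sum_sub_distrib, ← sum_mul]
        ring
    _ ≤ S * log (1 + G) + (1 - S) * log (1 + G) := by
        gcongr
        exact div_one_add_le_log_one_add hG
    _ = log (1 + G) := by ring

theorem sum_mul_log_one_add_div_proportional {γ : ι → ℝ} (hγ : ∀ i, 0 < γ i) :
    ∑ i, γ i / (∑ j, γ j) * log (1 + γ i / (γ i / ∑ j, γ j)) = log (1 + ∑ j, γ j) := by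
  set G := ∑ j, γ j
  simp_rw [div_div_cancel₀ (hγ _).ne', ← sum_mul, ← sum_div]
  rcases eq_or_ne G 0 with hG | hG
  · simp [hG]
  · rw [div_self hG, one_mul]

end Real

theorem stmt_6_general (K : ℕ) (γ : Fin K → ℝ) (hγ : ∀ i, 0 < γ i)
    (τstar : Fin K → ℝ) (hτstar : ∀ i, τstar i = γ i / ∑ j, γ j) :
    (∀ i, 0 < τstar i) ∧ (∑ i, τstar i ≤ 1) ∧
      (∑ i, τstar i * Real.logb 2 (1 + γ i / τstar i) =
        Real.logb 2 (1 + ∑ j, γ j)) ∧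
      ∀ τ : Fin K → ℝ, (∀ i, 0 < τ i) → (∑ i, τ i ≤ 1) →
        ∑ i, τ i * Real.logb 2 (1 + γ i / τ i) ≤ Real.logb 2 (1 + ∑ j, γ j) := by
  obtain rfl : τstar = fun i => γ i / ∑ j, γ j := funext hτstar
  have hlogb (τ : Fin K → ℝ) : ∑ i, τ i * Real.logb 2 (1 + γ i / τ i) =
      (∑ i, τ i * Real.log (1 + γ i / τ i)) / Real.log 2 := by
    simp only [Real.logb, mul_div_assoc, sum_div]
  have hγ_le_sum (i : Fin K) : γ i ≤ ∑ j, γ j :=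
    single_le_sum (fun j _ => (hγ j).le) (mem_univ i)
  refine ⟨fun i => div_pos (hγ i) ((hγ i).trans_le (hγ_le_sum i)),
    by rw [← sum_div]; exact div_self_le_one _, ?_, fun τ hτ hτsum => ?_⟩
  · rw [hlogb, Real.sum_mul_log_one_add_div_proportional hγ, Real.logb]
  · rw [hlogb, Real.logb]
    exact div_le_div_of_nonneg_right
      (Real.sum_mul_log_one_add_div_le (fun i => (hγ i).le) hτ hτsum) (Real.log_nonneg one_le_two)

/-- With K ≥ 1 users and γᵢ > 0, the sum-throughput Σᵢ τᵢ log₂(1 + γᵢ/τᵢ)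
subject to Σᵢ τᵢ ≤ 1, τᵢ > 0, is maximized by τᵢ* = γᵢ/(Σⱼ γⱼ), achieving
the value log₂(1 + Σⱼ γⱼ). -/
theorem stmt_6 (K : ℕ) (hK : 1 ≤ K) (γ : Fin K → ℝ) (hγ : ∀ i, 0 < γ i)
    (τstar : Fin K → ℝ) (hτstar : ∀ i, τstar i = γ i / ∑ j, γ j) :
    (∀ i, 0 < τstar i) ∧ (∑ i, τstar i ≤ 1) ∧
      (∑ i, τstar i * Real.logb 2 (1 + γ i / τstar i) =
        Real.logb 2 (1 + ∑ j, γ j)) ∧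
      ∀ τ : Fin K → ℝ, (∀ i, 0 < τ i) → (∑ i, τ i ≤ 1) →
        ∑ i, τ i * Real.logb 2 (1 + γ i / τ i) ≤ Real.logb 2 (1 + ∑ j, γ j) :=
  stmt_6_general K γ hγ τstar hτstar
end

section
/- If τ* maximizes Σᵢ ωᵢ τᵢ log₂(1 + γᵢ/τᵢ) subject to Σᵢ τᵢ = 1, τᵢ > 0, then there exists λ* > 0 such that for every i: ωᵢ · [ln(1 + zᵢ*) - zᵢ*/(1 + zᵢ*)] = λ* ln 2, where zᵢ* = γᵢ/τᵢ*. -/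
/-!
The objective is separable, `∑ hᵢ(τᵢ)` with `hᵢ(t) = ωᵢ t log₂(1 + γᵢ/t)`, and
`hᵢ'(t) = ωᵢ (ln(1 + z) - z/(1 + z)) / ln 2` at `z = γᵢ/t`. Shifting mass `t` from coordinate
`j` to coordinate `i` stays inside the open simplex for small `t`, so `t = 0` is a local maximum
of the objective along that line and `hᵢ'(τᵢ*) = hⱼ'(τⱼ*)`. This common value is `λ*`; it is
positive because `ln(1 + z) > z/(1 + z)` for `z > 0`.
-/

open Finset

theorem Real.log_one_add_sub_div_one_add_pos {z : ℝ} (hz : 0 < z) :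
    0 < Real.log (1 + z) - z / (1 + z) := by
  have h1z : 0 < 1 + z := by linarith
  have hlog := Real.log_lt_sub_one_of_pos (inv_pos.mpr h1z) (inv_ne_one.mpr (by linarith))
  rw [Real.log_inv] at hlog
  have hz' : z / (1 + z) = 1 - (1 + z)⁻¹ := by field_simp; ring
  linarith

theorem hasDerivAt_mul_log_one_add_div {g s : ℝ} (hs : s ≠ 0) (hgs : 1 + g / s ≠ 0) :
    HasDerivAt (fun t => t * Real.log (1 + g / t))
      (Real.log (1 + g / s) - g / s / (1 + g / s)) s := by
  have hinner : HasDerivAt (fun t => 1 + g / t) (-(g / s ^ 2)) s := by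
    simpa [div_eq_mul_inv] using ((hasDerivAt_inv hs).const_mul g).const_add 1
  refine ((hasDerivAt_id' s).fun_mul (hinner.log hgs)).congr_deriv ?_
  field_simp
  ring

theorem hasDerivAt_mul_logb_one_add_div (b : ℝ) {g s : ℝ} (hs : s ≠ 0) (hgs : 1 + g / s ≠ 0) :
    HasDerivAt (fun t => t * Real.logb b (1 + g / t))
      ((Real.log (1 + g / s) - g / s / (1 + g / s)) / Real.log b) s := by
  simpa only [Real.logb, mul_div_assoc] using
    (hasDerivAt_mul_log_one_add_div hs hgs).div_const (Real.log b)

section Simplex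

variable {ι : Type*} [Fintype ι] {h : ι → ℝ → ℝ} {d x : ι → ℝ}

theorem sum_mul_eq_zero_of_isMaxOn_simplex (hx : ∀ i, 0 < x i)
    (hd : ∀ i, HasDerivAt (h i) (d i) (x i))
    (hmax : ∀ y : ι → ℝ, (∀ i, 0 < y i) → ∑ i, y i = ∑ i, x i →
      ∑ i, h i (y i) ≤ ∑ i, h i (x i))
    {v : ι → ℝ} (hv : ∑ i, v i = 0) :
    ∑ i, d i * v i = 0 := by
  let G : ℝ → ℝ := fun t => ∑ i, h i (x i + t * v i)
  have hline : ∀ i, HasDerivAt (fun t : ℝ => x i + t * v i) (v i) 0 := fun i => by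
    simpa using ((hasDerivAt_id (0 : ℝ)).mul_const (v i)).const_add (x i)
  have hG : HasDerivAt G (∑ i, d i * v i) 0 :=
    HasDerivAt.fun_sum fun i _ => (hd i).comp_of_eq (0 : ℝ) (hline i) (by simp)
  have hpos : ∀ᶠ t in nhds (0 : ℝ), ∀ i, 0 < x i + t * v i :=
    Filter.eventually_all.mpr fun i =>
      continuousAt_const.eventually_lt (hline i).continuousAt (by simpa using hx i)
  have hloc : IsLocalMax G 0 := by
    filter_upwards [hpos] with t ht
    simpa [G] using hmax _ ht (by simp [sum_add_distrib, ← mul_sum, hv])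
  exact hloc.hasDerivAt_eq_zero hG

theorem eq_of_isMaxOn_simplex [DecidableEq ι] (hx : ∀ i, 0 < x i)
    (hd : ∀ i, HasDerivAt (h i) (d i) (x i))
    (hmax : ∀ y : ι → ℝ, (∀ i, 0 < y i) → ∑ i, y i = ∑ i, x i →
      ∑ i, h i (y i) ≤ ∑ i, h i (x i))
    (i j : ι) : d i = d j := by
  have := sum_mul_eq_zero_of_isMaxOn_simplex hx hd hmax
    (v := Pi.single i 1 - Pi.single j 1) (by simp [sum_sub_distrib])
  simpa [Pi.single_apply, mul_sub, sum_sub_distrib, sub_eq_zero] using this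

end Simplex

/-- If τ* maximizes Σᵢ ωᵢ τᵢ log₂(1 + γᵢ/τᵢ) subject to Σᵢ τᵢ = 1, τᵢ > 0,
then there is λ* > 0 with ωᵢ·[ln(1+zᵢ*) - zᵢ*/(1+zᵢ*)] = λ* ln 2 for all i,
where zᵢ* = γᵢ/τᵢ*. -/
theorem stmt_9 (K : ℕ) (ω γ : Fin K → ℝ) (hω : ∀ i, 0 < ω i) (hγ : ∀ i, 0 < γ i)
    (τstar : Fin K → ℝ) (hpos : ∀ i, 0 < τstar i) (hsum : ∑ i, τstar i = 1)
    (hmax : ∀ τ : Fin K → ℝ, (∀ i, 0 < τ i) → (∑ i, τ i = 1) →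
      ∑ i, ω i * (τ i * Real.logb 2 (1 + γ i / τ i)) ≤
        ∑ i, ω i * (τstar i * Real.logb 2 (1 + γ i / τstar i))) :
    ∃ lam : ℝ, 0 < lam ∧ ∀ i,
      ω i * (Real.log (1 + γ i / τstar i) -
        (γ i / τstar i) / (1 + γ i / τstar i)) = lam * Real.log 2 := by
  set D : Fin K → ℝ := fun i =>
    ω i * (Real.log (1 + γ i / τstar i) - (γ i / τstar i) / (1 + γ i / τstar i))
  have hlog2 : 0 < Real.log 2 := Real.log_pos one_lt_two
  have hd : ∀ i, HasDerivAt (fun t => ω i * (t * Real.logb 2 (1 + γ i / t)))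
      (D i / Real.log 2) (τstar i) := fun i => by
    simpa only [D, mul_div_assoc] using
      (hasDerivAt_mul_logb_one_add_div 2 (hpos i).ne'
        (add_pos one_pos (div_pos (hγ i) (hpos i))).ne').const_mul (ω i)
  have hD : ∀ i j, D i = D j := fun i j => by
    have := eq_of_isMaxOn_simplex hpos hd (fun y hy hy' => hmax y hy (hy'.trans hsum)) i j
    rwa [div_left_inj' hlog2.ne'] at this
  obtain ⟨i₀, -⟩ : (univ : Finset (Fin K)).Nonempty :=
    nonempty_of_sum_ne_zero (f := τstar) (by rw [hsum]; exact one_ne_zero)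
  refine ⟨D i₀ / Real.log 2, div_pos (mul_pos (hω i₀)
    (Real.log_one_add_sub_div_one_add_pos (div_pos (hγ i₀) (hpos i₀)))) hlog2, fun i => ?_⟩
  rw [div_mul_cancel₀ _ hlog2.ne']
  exact hD i i₀
end
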